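/- If (X_test, Y_test) is exchangeable with the calibration pairs and the scores d_1,...,d_N, d_test are almost surely distinct, then the coverage is also upper bounded: P(d_test ≤ d_{(k)}) ≤ k/(N+1) where d_{(k)} is the k-th order statistic of d_1,...,d_N; in particular with k = ⌈(1-α)(N+1)⌉ the coverage is at most 1-α + 1/(N+1). -/
import Mathlib


open MeasureTheory
open scoped ENNReal

/-- The `k`-th smallest value (0-indexed) among `d 0, …, d (N-1)`. -/
noncomputable def orderStat {N : ℕ} (d : Fin N → ℝ) (k : Fin N) : ℝ :=
  d (Tuple.sort d k)

/-- Card of a filter is invariant under precomposition with a permutation. -/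
lemma card_filter_perm {n : ℕ} (π : Equiv.Perm (Fin n)) (p : Fin n → Prop) [DecidablePred p] :
    (Finset.univ.filter (fun i => p (π i))).card = (Finset.univ.filter p).card := by
  apply Finset.card_bij' (fun i _ => π i) (fun i _ => π.symm i)
  · intro a ha; simpa using (Finset.mem_filter.mp ha).2
  · intro a ha; simp [Finset.mem_filter, (Finset.mem_filter.mp ha).2]
  · intro a _; simp
  · intro a _; simp

/-- For injective tuples, the rank function is injective. -/
lemma rank_injective {n : ℕ} (x : Fin n → ℝ) (hinj : Function.Injective x) :
    Function.Injective (fun j => (Finset.univ.filter (fun i => x i < x j)).card) := by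
  have key : ∀ a b : Fin n, x a < x b →
      (Finset.univ.filter (fun i => x i < x a)).card
        < (Finset.univ.filter (fun i => x i < x b)).card := by
    intro a b hab
    apply Finset.card_lt_card
    constructor
    · intro i hi
      simp only [Finset.mem_filter, Finset.mem_univ, true_and] at hi ⊢
      exact hi.trans hab
    · intro hsub
      have := hsub (Finset.mem_filter.mpr ⟨Finset.mem_univ a, hab⟩)
      simp only [Finset.mem_filter] at this
      exact lt_irrefl _ this.2
  intro a b hab
  by_contra hne
  rcases lt_or_gt_of_ne (fun e => hne (hinj e)) with h | h
  · exact absurd hab (Nat.ne_of_lt (key a b h))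
  · exact absurd hab.symm (Nat.ne_of_lt (key b a h))

/-- Characterization of being below the `j`-th order statistic via ranks. -/
lemma le_orderStat_iff {n : ℕ} (x : Fin n → ℝ) (hinj : Function.Injective x)
    (t : ℝ) (j : Fin n) :
    t ≤ orderStat x j ↔ (Finset.univ.filter (fun i => x i < t)).card ≤ (j : ℕ) := by
  set σ := Tuple.sort x with hσ
  have hv : StrictMono (x ∘ σ) :=
    (Tuple.monotone_sort x).strictMono_of_injective (hinj.comp σ.injective)
  have hcard : (Finset.univ.filter (fun i => x i < t)).card
      = (Finset.univ.filter (fun i => (x ∘ σ) i < t)).card :=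
    (card_filter_perm σ (fun i => x i < t)).symm
  have hOS : orderStat x j = (x ∘ σ) j := rfl
  rw [hOS, hcard]
  constructor
  · intro h
    have hsub : (Finset.univ.filter (fun i => (x ∘ σ) i < t)) ⊆ Finset.Iio j := by
      intro i hi
      simp only [Finset.mem_filter, Finset.mem_univ, true_and] at hi
      simp only [Finset.mem_Iio]
      exact hv.lt_iff_lt.mp (lt_of_lt_of_le hi h)
    calc (Finset.univ.filter (fun i => (x ∘ σ) i < t)).card
        ≤ (Finset.Iio j).card := Finset.card_le_card hsub
      _ = (j : ℕ) := Fin.card_Iio j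
  · intro h
    by_contra hlt
    push_neg at hlt
    have hsub : Finset.Iic j ⊆ (Finset.univ.filter (fun i => (x ∘ σ) i < t)) := by
      intro i hi
      simp only [Finset.mem_Iic] at hi
      simp only [Finset.mem_filter, Finset.mem_univ, true_and]
      exact lt_of_le_of_lt (hv.monotone hi) hlt
    have := Finset.card_le_card hsub
    rw [Fin.card_Iic] at this
    omega

/-- two-sided conformal bound. If the scores are exchangeable and a.s.
pairwise distinct, then `P(d_test ≤ d_{(k)}) ≤ k/(N+1)`, and with `k = ⌈(1-α)(N+1)⌉` the
coverage is at most `1 - α + 1/(N+1)`. -/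
theorem conformal_coverage_upper_bound
    {Ω : Type*} [MeasurableSpace Ω] (ℙ : Measure Ω) [IsProbabilityMeasure ℙ]
    {N : ℕ} (hN : 0 < N)
    (d : Fin (N + 1) → Ω → ℝ) (hd : ∀ i, Measurable (d i))
    (hexch : ∀ π : Equiv.Perm (Fin (N + 1)),
      Measure.map (fun ω => fun i => d (π i) ω) ℙ =
      Measure.map (fun ω => fun i => d i ω) ℙ)
    (hdist : ∀ᵐ ω ∂ℙ, ∀ i j : Fin (N + 1), i ≠ j → d i ω ≠ d j ω)
    (α : ℝ) (hα : α ∈ Set.Ioo (0 : ℝ) 1)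
    (k : ℕ) (hk : k = ⌈(1 - α) * (N + 1)⌉₊) (hkN : k ≤ N) :
    ℙ {ω | d (Fin.last N) ω ≤
        orderStat (fun i : Fin N => d i.castSucc ω) ⟨k - 1, by omega⟩} ≤
      ENNReal.ofReal ((k : ℝ) / (N + 1)) ∧
    ℙ {ω | d (Fin.last N) ω ≤
        orderStat (fun i : Fin N => d i.castSucc ω) ⟨k - 1, by omega⟩} ≤
      ENNReal.ofReal (1 - α + 1 / (N + 1)) := by
  obtain ⟨hα0, hα1⟩ := hα
  have hk1 : 1 ≤ k := by
    rw [hk]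
    exact Nat.one_le_ceil_iff.mpr (mul_pos (by linarith) (by positivity))
  -- the joint map
  set f : Ω → (Fin (N + 1) → ℝ) := fun ω i => d i ω with hf
  have hfm : Measurable f := measurable_pi_lambda _ hd
  -- rank sets
  set S : ℕ → Fin (N + 1) → Set (Fin (N + 1) → ℝ) := fun r j =>
    {x | (Finset.univ.filter (fun i => x i < x j)).card = r} with hS
  have hSm : ∀ r j, MeasurableSet (S r j) := by
    intro r j
    have hmeas : Measurable
        (fun x : Fin (N + 1) → ℝ => (Finset.univ.filter (fun i => x i < x j)).card) := by
      simp only [Finset.card_filter]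
      apply Finset.measurable_sum
      intro i _
      exact Measurable.ite (measurableSet_lt (measurable_pi_apply i) (measurable_pi_apply j))
        measurable_const measurable_const
    exact hmeas (measurableSet_singleton r)
  -- equal probabilities by exchangeability
  have hAeq : ∀ r (j : Fin (N + 1)), ℙ (f ⁻¹' S r j) = ℙ (f ⁻¹' S r (Fin.last N)) := by
    intro r j
    set π : Equiv.Perm (Fin (N + 1)) := Equiv.swap j (Fin.last N) with hπ
    have hπlast : π (Fin.last N) = j := Equiv.swap_apply_right _ _
    have key : f ⁻¹' S r j = (fun ω => fun i => d (π i) ω) ⁻¹' S r (Fin.last N) := by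
      ext ω
      simp only [Set.mem_preimage, hS, Set.mem_setOf_eq, hf]
      simp only [hπlast]
      rw [card_filter_perm π (fun i => d i ω < d j ω)]
    have h1 : ℙ (f ⁻¹' S r j)
        = Measure.map (fun ω => fun i => d (π i) ω) ℙ (S r (Fin.last N)) := by
      rw [key, Measure.map_apply (measurable_pi_lambda _ (fun i => hd (π i))) (hSm r _)]
    rw [h1, hexch π, Measure.map_apply hfm (hSm r _)]
  -- the distinctness set
  set D : Set Ω := {ω | ∀ i j : Fin (N + 1), i ≠ j → d i ω ≠ d j ω} with hD
  have hDm : MeasurableSet D := by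
    have hrw : D = ⋂ (i : Fin (N + 1)) (j : Fin (N + 1)) (_ : i ≠ j), {ω | d i ω ≠ d j ω} := by
      ext ω; simp [hD]
    rw [hrw]
    exact MeasurableSet.iInter fun i => MeasurableSet.iInter fun j =>
      MeasurableSet.iInter fun _ => (measurableSet_eq_fun (hd i) (hd j)).compl
  have hDc : ℙ Dᶜ = 0 := by
    rw [hD, Set.compl_setOf]
    exact ae_iff.mp hdist
  have hinjD : ∀ ω ∈ D, Function.Injective (fun i => d i ω) := by
    intro ω hωD a b hab
    by_contra hne
    exact hωD a b hne hab
  -- each rank-set has measure ≤ 1/(N+1)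
  have hbound : ∀ r, ℙ (f ⁻¹' S r (Fin.last N)) ≤ ((N : ℝ≥0∞) + 1)⁻¹ := by
    intro r
    have hdisj : ∀ j ∈ (Finset.univ : Finset (Fin (N + 1))), ∀ j' ∈ Finset.univ, j ≠ j' →
        Disjoint (f ⁻¹' S r j ∩ D) (f ⁻¹' S r j' ∩ D) := by
      intro j _ j' _ hjj
      rw [Set.disjoint_left]
      rintro ω ⟨hj, hωD⟩ ⟨hj', _⟩
      simp only [Set.mem_preimage, hS, Set.mem_setOf_eq] at hj hj'
      exact hjj (rank_injective _ (hinjD ω hωD) (hj.trans hj'.symm))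
    have hsum : ∑ j : Fin (N + 1), ℙ (f ⁻¹' S r j ∩ D) ≤ 1 := by
      rw [← measure_biUnion_finset hdisj
        (fun j _ => ((hSm r j).preimage hfm).inter hDm)]
      exact prob_le_one
    have hsame : ∀ j : Fin (N + 1), ℙ (f ⁻¹' S r j ∩ D) = ℙ (f ⁻¹' S r (Fin.last N)) := by
      intro j
      rw [measure_inter_conull hDc, hAeq]
    rw [Finset.sum_congr rfl (fun j _ => hsame j), Finset.sum_const] at hsum
    simp only [Finset.card_univ, Fintype.card_fin, nsmul_eq_mul] at hsum
    rw [ENNReal.le_inv_iff_mul_le]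
    calc ℙ (f ⁻¹' S r (Fin.last N)) * ((N : ℝ≥0∞) + 1)
        = ((N : ℝ≥0∞) + 1) * ℙ (f ⁻¹' S r (Fin.last N)) := mul_comm _ _
      _ = ((N + 1 : ℕ) : ℝ≥0∞) * ℙ (f ⁻¹' S r (Fin.last N)) := by push_cast; ring_nf
      _ ≤ 1 := hsum
  -- the event, intersected with D, is inside the union of small-rank sets
  set E : Set Ω := {ω | d (Fin.last N) ω ≤
      orderStat (fun i : Fin N => d i.castSucc ω) ⟨k - 1, by omega⟩} with hE
  have hsubset : E ∩ D ⊆ ⋃ r ∈ Finset.range k, f ⁻¹' S r (Fin.last N) := by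
    rintro ω ⟨hωE, hωD⟩
    have hinj : Function.Injective (fun i => d i ω) := hinjD ω hωD
    have hinj' : Function.Injective (fun i : Fin N => d i.castSucc ω) :=
      fun a b hab => Fin.castSucc_injective N (hinj hab)
    have hrank : ((Finset.univ : Finset (Fin N)).filter
          (fun i => d i.castSucc ω < d (Fin.last N) ω)).card ≤ k - 1 := by
      have := (le_orderStat_iff (fun i : Fin N => d i.castSucc ω) hinj'
        (d (Fin.last N) ω) ⟨k - 1, by omega⟩).mp hωE
      exact this
    -- full rank over Fin (N+1)
    have hfull : ((Finset.univ : Finset (Fin (N + 1))).filter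
          (fun i => d i ω < d (Fin.last N) ω)).card
        = ((Finset.univ : Finset (Fin N)).filter
          (fun i => d i.castSucc ω < d (Fin.last N) ω)).card := by
      rw [Finset.card_filter, Finset.card_filter, Fin.sum_univ_castSucc]
      simp
    simp only [Set.mem_iUnion]
    refine ⟨((Finset.univ : Finset (Fin (N + 1))).filter
      (fun i => d i ω < d (Fin.last N) ω)).card, ?_, ?_⟩
    · rw [Finset.mem_range, hfull]; omega
    · simp only [Set.mem_preimage, hS, Set.mem_setOf_eq, hf]
  -- conclude the first bound
  have hmain : ℙ E ≤ ENNReal.ofReal ((k : ℝ) / (N + 1)) := by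
    have h1 : ℙ E = ℙ (E ∩ D) := (measure_inter_conull hDc).symm
    have h2 : ℙ (E ∩ D) ≤ ∑ r ∈ Finset.range k, ℙ (f ⁻¹' S r (Fin.last N)) :=
      (measure_mono hsubset).trans (measure_biUnion_finset_le _ _)
    have h3 : ∑ r ∈ Finset.range k, ℙ (f ⁻¹' S r (Fin.last N))
        ≤ (k : ℝ≥0∞) * ((N : ℝ≥0∞) + 1)⁻¹ := by
      calc ∑ r ∈ Finset.range k, ℙ (f ⁻¹' S r (Fin.last N))
          ≤ ∑ _r ∈ Finset.range k, ((N : ℝ≥0∞) + 1)⁻¹ :=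
            Finset.sum_le_sum fun r _ => hbound r
        _ = (k : ℝ≥0∞) * ((N : ℝ≥0∞) + 1)⁻¹ := by
            rw [Finset.sum_const, Finset.card_range, nsmul_eq_mul]
    have h4 : (k : ℝ≥0∞) * ((N : ℝ≥0∞) + 1)⁻¹ = ENNReal.ofReal ((k : ℝ) / (N + 1)) := by
      rw [ENNReal.ofReal_div_of_pos (by positivity), div_eq_mul_inv,
        ENNReal.ofReal_natCast]
      congr 1
      rw [show ((N : ℝ) + 1) = ((N + 1 : ℕ) : ℝ) by push_cast; ring,
        ENNReal.ofReal_natCast]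
      push_cast; ring
    rw [h1, ← h4]
    exact h2.trans h3
  refine ⟨hmain, hmain.trans (ENNReal.ofReal_le_ofReal ?_)⟩
  have hceil : (k : ℝ) < (1 - α) * (N + 1) + 1 := by
    rw [hk]
    exact Nat.ceil_lt_add_one (mul_pos (by linarith) (by positivity)).le
  have hN1 : (0 : ℝ) < (N : ℝ) + 1 := by positivity
  have : (k : ℝ) / (N + 1) ≤ ((1 - α) * (N + 1) + 1) / (N + 1) := by
    gcongr
  calc (k : ℝ) / (N + 1) ≤ ((1 - α) * (N + 1) + 1) / (N + 1) := this
    _ = 1 - α + 1 / (N + 1) := by field_simp
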